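/- arXiv:math/0311440 — 4 statements merged into one kernel-verified Lean document; each statement's English description precedes it below -/
import Mathlib

section
/- Let (x_n) be a sequence in (0,1) with x_1 ∈ (0, 1/2) satisfying the recurrence x_{n+1} = (1 + x_n)^2 / 4. Then for every n ≥ 1 one has 0 ≤ x_n ≤ 1 - 1/(2n). -/
/-! The map `x ↦ (1 + x)² / 4` is increasing on `[0, ∞)` and sends `1 - b` to `1 - b + b² / 4`.
Starting from the bound `x₁ ≤ 1/2`, induction on `n` with `b = 1/(2n)` therefore only needs
`1/(2n) - 1/(16n²) ≥ 1/(2(n+1))`, i.e. `1/(2n(n+1)) ≥ 1/(16n²)`, which holds for `n ≥ 1/7`. -/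

lemma one_add_sq_div_four_le {x b : ℝ} (hx : 0 ≤ x) (hxb : x ≤ 1 - b) :
    (1 + x) ^ 2 / 4 ≤ 1 - b + b ^ 2 / 4 := by
  have hsq : (1 + x) ^ 2 ≤ (2 - b) ^ 2 := pow_le_pow_left₀ (by linarith) (by linarith) 2
  linarith

lemma one_sub_one_div_two_mul_add_sq_div_four_le {t : ℝ} (ht : 1 / 7 ≤ t) :
    1 - 1 / (2 * t) + (1 / (2 * t)) ^ 2 / 4 ≤ 1 - 1 / (2 * (t + 1)) := by
  have ht0 : 0 < t := by linarith
  rw [div_pow, ← sub_nonneg]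
  have key : 1 - 1 / (2 * (t + 1)) - (1 - 1 / (2 * t) + 1 ^ 2 / (2 * t) ^ 2 / 4)
      = (7 * t - 1) / (16 * t ^ 2 * (t + 1)) := by
    field_simp
    ring
  rw [key]
  apply div_nonneg <;> nlinarith

theorem stmt_0_general (x : ℕ → ℝ)
    (hx1 : x 1 ∈ Set.Ioo (0 : ℝ) (1 / 2))
    (hrec : ∀ n, 1 ≤ n → x (n + 1) = (1 + x n) ^ 2 / 4) :
    ∀ n, 1 ≤ n → 0 ≤ x n ∧ x n ≤ 1 - 1 / (2 * n) := by
  intro n hn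
  induction n, hn using Nat.le_induction with
  | base =>
    norm_num
    exact ⟨hx1.1.le, hx1.2.le⟩
  | succ n hn ih =>
    have hnR : (1 : ℝ) ≤ n := by exact_mod_cast hn
    rw [hrec n hn]
    refine ⟨by positivity, ?_⟩
    push_cast
    exact (one_add_sq_div_four_le ih.1 ih.2).trans (one_sub_one_div_two_mul_add_sq_div_four_le (by linarith))

theorem stmt_0 (x : ℕ → ℝ)
    (hmem : ∀ n, 1 ≤ n → x n ∈ Set.Ioo (0 : ℝ) 1)
    (hx1 : x 1 ∈ Set.Ioo (0 : ℝ) (1 / 2))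
    (hrec : ∀ n, 1 ≤ n → x (n + 1) = (1 + x n) ^ 2 / 4) :
    ∀ n, 1 ≤ n → 0 ≤ x n ∧ x n ≤ 1 - 1 / (2 * n) :=
  stmt_0_general x hx1 hrec
end

section
/- Let (x_n) be a sequence in (0,1) with x_1 ∈ (0,1/2) satisfying x_{n+1} = (1+x_n)^2/4. Then x_{n+1} - x_n ≥ 1/(16 n^2) for all n ≥ 1. -/
/-!
Since `x (n+1) - x n = (1 - x n)^2 / 4`, it suffices to show `1 - x n ≥ 1 / (2n)`. This follows by
induction: the map `t ↦ (1 + t)^2 / 4` is monotone on `[-1, ∞)`, and it sends `1 - 1/(2n)` to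
`1 - 1/(2n) + 1/(16 n^2) ≤ 1 - 1/(2(n+1))`.
-/

lemma one_add_sq_div_four_le_one_sub_inv {r : ℝ} (hr : 1 / 7 ≤ r) :
    (1 + (1 - 1 / (2 * r))) ^ 2 / 4 ≤ 1 - 1 / (2 * (r + 1)) := by
  have hr0 : 0 < r := by linarith
  rw [← sub_nonneg]
  have key : 1 - 1 / (2 * (r + 1)) - (1 + (1 - 1 / (2 * r))) ^ 2 / 4
      = (7 * r - 1) / (16 * r ^ 2 * (r + 1)) := by
    field_simp
    ring
  rw [key]
  exact div_nonneg (by linarith) (by positivity)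

section

variable {x : ℕ → ℝ} (hx1 : x 1 ∈ Set.Ioo (0 : ℝ) (1 / 2))
  (hrec : ∀ n, 1 ≤ n → x (n + 1) = (1 + x n) ^ 2 / 4)
include hx1 hrec

lemma nonneg_of_one_le {n : ℕ} (hn : 1 ≤ n) : 0 ≤ x n := by
  induction n, hn using Nat.le_induction with
  | base => exact hx1.1.le
  | succ n hn _ =>
    rw [hrec n hn]
    positivity

lemma le_one_sub_inv_two_mul {n : ℕ} (hn : 1 ≤ n) : x n ≤ 1 - 1 / (2 * (n : ℝ)) := by
  induction n, hn using Nat.le_induction with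
  | base => norm_num; linarith [hx1.2]
  | succ n hn ih =>
    have hx0 := nonneg_of_one_le hx1 hrec hn
    have hn' : (1 / 7 : ℝ) ≤ n := by
      have : (1 : ℝ) ≤ n := by exact_mod_cast hn
      linarith
    rw [hrec n hn]
    push_cast
    calc (1 + x n) ^ 2 / 4 ≤ (1 + (1 - 1 / (2 * (n : ℝ)))) ^ 2 / 4 := by gcongr
      _ ≤ 1 - 1 / (2 * ((n : ℝ) + 1)) := one_add_sq_div_four_le_one_sub_inv hn'

end

theorem stmt_2_general (x : ℕ → ℝ)
    (hx1 : x 1 ∈ Set.Ioo (0 : ℝ) (1 / 2))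
    (hrec : ∀ n, 1 ≤ n → x (n + 1) = (1 + x n) ^ 2 / 4) :
    ∀ n, 1 ≤ n → x (n + 1) - x n ≥ 1 / (16 * (n : ℝ) ^ 2) := by
  intro n hn
  have hgap : 1 / (2 * (n : ℝ)) ≤ 1 - x n := by
    linarith [le_one_sub_inv_two_mul hx1 hrec hn]
  have hn0 : (0 : ℝ) < n := by exact_mod_cast hn
  calc 1 / (16 * (n : ℝ) ^ 2) = (1 / (2 * (n : ℝ))) ^ 2 / 4 := by field_simp; ring
    _ ≤ (1 - x n) ^ 2 / 4 := by gcongr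
    _ = x (n + 1) - x n := by rw [hrec n hn]; ring

theorem stmt_2 (x : ℕ → ℝ)
    (hmem : ∀ n, 1 ≤ n → x n ∈ Set.Ioo (0 : ℝ) 1)
    (hx1 : x 1 ∈ Set.Ioo (0 : ℝ) (1 / 2))
    (hrec : ∀ n, 1 ≤ n → x (n + 1) = (1 + x n) ^ 2 / 4) :
    ∀ n, 1 ≤ n → x (n + 1) - x n ≥ 1 / (16 * (n : ℝ) ^ 2) :=
  stmt_2_general x hx1 hrec
end

section
/- Let (x_n) be a sequence in (0,1) with x_1 ∈ (0,1/2) satisfying x_{n+1} = (1+x_n)^2/4. Then the series ∑_{n≥1} n (x_{n+1} - x_n) diverges to +∞. -/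
/-!
In the variable `y = 1 - x` the recurrence reads `y ↦ y - y²/4`, and
`1/(y - y²/4) = 1/y + 1/(4 - y)`. Hence `1/y` grows by at most `1/3` per step, so `y_n ≳ 1/n`
and the `n`-th term `n (x_{n+1} - x_n) = n y_n² / 4` is at least a multiple of `1/n`:
the series dominates the harmonic series.
-/

open Filter Finset

theorem tendsto_sum_Icc_inv_atTop :
    Tendsto (fun N : ℕ => ∑ n ∈ Icc 1 N, (n : ℝ)⁻¹) atTop atTop := by
  have hlog : Tendsto (fun N : ℕ => Real.log ((N + 1 : ℕ) : ℝ)) atTop atTop :=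
    Real.tendsto_log_atTop.comp (tendsto_natCast_atTop_atTop.comp (tendsto_add_atTop_nat 1))
  refine tendsto_atTop_mono (fun N => ?_) hlog
  simpa only [harmonic_eq_sum_Icc, Rat.cast_sum, Rat.cast_inv, Rat.cast_natCast]
    using log_add_one_le_harmonic N

theorem one_add_sq_div_four_mem_Ioo {t : ℝ} (ht : t ∈ Set.Ioo (0 : ℝ) 1) :
    (1 + t) ^ 2 / 4 ∈ Set.Ioo (0 : ℝ) 1 := by
  obtain ⟨h0, h1⟩ := ht
  constructor <;> nlinarith

theorem inv_one_sub_one_add_sq_div_four_le {t : ℝ} (ht : t ∈ Set.Ioo (0 : ℝ) 1) :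
    (1 - (1 + t) ^ 2 / 4)⁻¹ ≤ (1 - t)⁻¹ + 3⁻¹ := by
  obtain ⟨h0, h1⟩ := ht
  have hstep : 1 - (1 + t) ^ 2 / 4 = (1 - t) * (3 + t) / 4 := by ring
  have hsplit : (1 - (1 + t) ^ 2 / 4)⁻¹ = (1 - t)⁻¹ + (3 + t)⁻¹ := by
    rw [hstep]
    field_simp [(by linarith : 1 - t ≠ 0), (by linarith : 3 + t ≠ 0)]
    ring
  rw [hsplit]
  gcongr
  linarith

section Recurrence

variable {x : ℕ → ℝ}

theorem mem_Ioo_of_rec (hx1 : x 1 ∈ Set.Ioo (0 : ℝ) 1)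
    (hrec : ∀ n, 1 ≤ n → x (n + 1) = (1 + x n) ^ 2 / 4) :
    ∀ n, 1 ≤ n → x n ∈ Set.Ioo (0 : ℝ) 1 := by
  intro n hn
  induction n, hn using Nat.le_induction with
  | base => exact hx1
  | succ n hn ih => rw [hrec n hn]; exact one_add_sq_div_four_mem_Ioo ih

theorem inv_one_sub_le_of_rec (hx1 : x 1 ∈ Set.Ioo (0 : ℝ) (1 / 2))
    (hrec : ∀ n, 1 ≤ n → x (n + 1) = (1 + x n) ^ 2 / 4) :
    ∀ n, 1 ≤ n → (1 - x n)⁻¹ ≤ n / 3 + 2 := by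
  have hmem := mem_Ioo_of_rec (Set.Ioo_subset_Ioo_right (by norm_num) hx1) hrec
  intro n hn
  induction n, hn using Nat.le_induction with
  | base =>
    obtain ⟨h0, h1⟩ := hx1
    rw [inv_le_comm₀ (by linarith) (by norm_num)]
    norm_num
    linarith
  | succ n hn ih =>
    rw [hrec n hn]
    push_cast
    linarith [inv_one_sub_one_add_sq_div_four_le (hmem n hn)]

theorem inv_mul_inv_le_mul_sub_of_rec (hx1 : x 1 ∈ Set.Ioo (0 : ℝ) (1 / 2))
    (hrec : ∀ n, 1 ≤ n → x (n + 1) = (1 + x n) ^ 2 / 4) (n : ℕ) (hn : 1 ≤ n) :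
    36⁻¹ * (n : ℝ)⁻¹ ≤ n * (x (n + 1) - x n) := by
  have hn' : (1 : ℝ) ≤ n := by exact_mod_cast hn
  have hpos : 0 < 1 - x n :=
    sub_pos.2 (mem_Ioo_of_rec (Set.Ioo_subset_Ioo_right (by norm_num) hx1) hrec n hn).2
  have hlower : (3 * n : ℝ)⁻¹ ≤ 1 - x n := by
    rw [inv_le_comm₀ (by positivity) hpos]
    linarith [inv_one_sub_le_of_rec hx1 hrec n hn]
  calc 36⁻¹ * (n : ℝ)⁻¹ = n * (3 * n : ℝ)⁻¹ ^ 2 / 4 := by field_simp; ring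
    _ ≤ n * (1 - x n) ^ 2 / 4 := by gcongr
    _ = n * (x (n + 1) - x n) := by rw [hrec n hn]; ring

end Recurrence

theorem stmt_3_general (x : ℕ → ℝ)
    (hx1 : x 1 ∈ Set.Ioo (0 : ℝ) (1 / 2))
    (hrec : ∀ n, 1 ≤ n → x (n + 1) = (1 + x n) ^ 2 / 4) :
    Tendsto (fun N : ℕ => ∑ n ∈ Finset.Icc 1 N, (n : ℝ) * (x (n + 1) - x n))
      atTop atTop := by
  have hharm := tendsto_sum_Icc_inv_atTop.const_mul_atTop (by norm_num : (0 : ℝ) < 36⁻¹)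
  refine tendsto_atTop_mono (fun N => ?_) hharm
  rw [mul_sum]
  exact sum_le_sum fun n hn => inv_mul_inv_le_mul_sub_of_rec hx1 hrec n (mem_Icc.1 hn).1

theorem stmt_3 (x : ℕ → ℝ)
    (hmem : ∀ n, 1 ≤ n → x n ∈ Set.Ioo (0 : ℝ) 1)
    (hx1 : x 1 ∈ Set.Ioo (0 : ℝ) (1 / 2))
    (hrec : ∀ n, 1 ≤ n → x (n + 1) = (1 + x n) ^ 2 / 4) :
    Tendsto (fun N : ℕ => ∑ n ∈ Finset.Icc 1 N, (n : ℝ) * (x (n + 1) - x n))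
      atTop atTop :=
  stmt_3_general x hx1 hrec
end

section
/- The map f : [-1,1] → [-1,1] defined by f(x) = 2√x − 1 for x ≥ 0 and f(x) = 1 − 2√(−x) for x < 0 preserves the normalized Lebesgue measure on [-1,1] (viewed as the circle with ±1 identified): for every Borel set A, m(f^{-1}(A)) = m(A). -/
open MeasureTheory
open scoped ENNReal

/-- The intermittent Manneville-type circle map on `[-1,1]`. -/
noncomputable def mannevilleMap (x : ℝ) : ℝ :=
  if 0 ≤ x then 2 * Real.sqrt x - 1 else 1 - 2 * Real.sqrt (-x)

/-- Normalized Lebesgue measure on `[-1,1]`. -/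
noncomputable def circleMeasure : Measure ℝ :=
  (2 : ℝ≥0∞)⁻¹ • (volume.restrict (Set.Icc (-1 : ℝ) 1))

/-!
On `[-1, 1]` the map has two inverse branches, `y ↦ ((y + 1) / 2) ^ 2` onto `[0, 1]` and
`y ↦ -((1 - y) / 2) ^ 2` onto `[-1, 0)`, with derivatives `(y + 1) / 2` and `(1 - y) / 2`.
By the change of variables formula the part of the preimage of `A` in `[-1, 1]` has Lebesgue
measure `∫_A (y + 1) / 2 + ∫_A (1 - y) / 2 = ∫_A 1`, integrals over `A ∩ [-1, 1]`.
-/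

open Set

theorem MeasureTheory.volume_image_eq_lintegral_abs_deriv {s : Set ℝ} {f f' : ℝ → ℝ}
    (hs : MeasurableSet s) (hf' : ∀ x ∈ s, HasDerivWithinAt f (f' x) s x) (hf : InjOn f s) :
    volume (f '' s) = ∫⁻ x in s, ENNReal.ofReal |f' x| := by
  simpa using lintegral_image_eq_lintegral_abs_deriv_mul hs hf' hf 1

theorem MeasureTheory.volume_preimage_inter_eq_lintegral_of_leftInvOn {T g g' : ℝ → ℝ}
    {I J A : Set ℝ} (hJ : MeasurableSet J) (hA : MeasurableSet A)
    (hg : ∀ y ∈ J, HasDerivAt g (g' y) y) (hinv : LeftInvOn T g J) (himage : g '' J = I) :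
    volume (T ⁻¹' A ∩ I) = ∫⁻ y in A ∩ J, ENNReal.ofReal |g' y| := by
  rw [← himage, ← hinv.image_inter']
  exact volume_image_eq_lintegral_abs_deriv (hA.inter hJ)
    (fun y hy => (hg y hy.2).hasDerivWithinAt) (hinv.mono inter_subset_right).injOn

namespace Manneville

noncomputable def rightBranch (y : ℝ) : ℝ := ((y + 1) / 2) ^ 2

noncomputable def leftBranch (y : ℝ) : ℝ := -((1 - y) / 2) ^ 2

theorem measurable_mannevilleMap : Measurable mannevilleMap :=
  Measurable.ite measurableSet_Ici (by fun_prop) (by fun_prop)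

theorem hasDerivAt_rightBranch (y : ℝ) : HasDerivAt rightBranch ((y + 1) / 2) y :=
  ((((hasDerivAt_id' y).add_const 1).div_const 2).fun_pow 2).congr_deriv (by norm_num; ring)

theorem hasDerivAt_leftBranch (y : ℝ) : HasDerivAt leftBranch ((1 - y) / 2) y :=
  ((((hasDerivAt_id' y).const_sub 1).div_const 2).fun_pow 2).fun_neg.congr_deriv
    (by norm_num; ring)

theorem mannevilleMap_rightBranch {y : ℝ} (hy : -1 ≤ y) : mannevilleMap (rightBranch y) = y := by
  rw [mannevilleMap, rightBranch, if_pos (sq_nonneg _), Real.sqrt_sq (by linarith)]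
  ring

theorem leftBranch_neg {y : ℝ} (hy : y < 1) : leftBranch y < 0 :=
  neg_neg_of_pos (pow_pos (by linarith) 2)

theorem mannevilleMap_leftBranch {y : ℝ} (hy : y < 1) : mannevilleMap (leftBranch y) = y := by
  rw [mannevilleMap, if_neg (leftBranch_neg hy).not_ge, leftBranch, neg_neg,
    Real.sqrt_sq (by linarith)]
  ring

theorem image_rightBranch_Icc : rightBranch '' Icc (-1) 1 = Icc 0 1 := by
  ext x
  constructor
  · rintro ⟨y, ⟨hy₁, hy₂⟩, rfl⟩
    exact ⟨sq_nonneg _, pow_le_one₀ (by linarith) (by linarith)⟩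
  · rintro ⟨hx₀, hx₁⟩
    have hs : √x ≤ 1 := Real.sqrt_le_one.mpr hx₁
    refine ⟨2 * √x - 1, ⟨by linarith [Real.sqrt_nonneg x], by linarith⟩, ?_⟩
    rw [rightBranch, show (2 * √x - 1 + 1) / 2 = √x by ring, Real.sq_sqrt hx₀]

theorem image_leftBranch_Ico : leftBranch '' Ico (-1) 1 = Ico (-1) 0 := by
  ext x
  constructor
  · rintro ⟨y, ⟨hy₁, hy₂⟩, rfl⟩
    exact ⟨neg_le_neg (pow_le_one₀ (by linarith) (by linarith)), leftBranch_neg hy₂⟩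
  · rintro ⟨hx₁, hx₀⟩
    have hs : √(-x) ≤ 1 := Real.sqrt_le_one.mpr (by linarith)
    have hs₀ : 0 < √(-x) := Real.sqrt_pos.mpr (by linarith)
    refine ⟨1 - 2 * √(-x), ⟨by linarith, by linarith⟩, ?_⟩
    rw [leftBranch, show (1 - (1 - 2 * √(-x))) / 2 = √(-x) by ring,
      Real.sq_sqrt (by linarith), neg_neg]

theorem volume_preimage_inter_Icc {A : Set ℝ} (hA : MeasurableSet A) :
    volume (mannevilleMap ⁻¹' A ∩ Icc (-1) 1) = volume (A ∩ Icc (-1) 1) := by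
  have hleft : volume (mannevilleMap ⁻¹' A ∩ Ico (-1) 0)
      = ∫⁻ y in A ∩ Icc (-1) 1, ENNReal.ofReal |(1 - y) / 2| := by
    rw [volume_preimage_inter_eq_lintegral_of_leftInvOn measurableSet_Ico hA
      (fun y _ => hasDerivAt_leftBranch y) (fun y hy => mannevilleMap_leftBranch hy.2)
      image_leftBranch_Ico]
    exact setLIntegral_congr ((ae_eq_refl A).inter Ico_ae_eq_Icc)
  have hright : volume (mannevilleMap ⁻¹' A ∩ Icc 0 1)
      = ∫⁻ y in A ∩ Icc (-1) 1, ENNReal.ofReal |(y + 1) / 2| :=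
    volume_preimage_inter_eq_lintegral_of_leftInvOn measurableSet_Icc hA
      (fun y _ => hasDerivAt_rightBranch y) (fun y hy => mannevilleMap_rightBranch hy.1)
      image_rightBranch_Icc
  have hsplit : volume (mannevilleMap ⁻¹' A ∩ Icc (-1) 1)
      = volume (mannevilleMap ⁻¹' A ∩ Ico (-1) 0) + volume (mannevilleMap ⁻¹' A ∩ Icc 0 1) := by
    rw [← measure_union (((Iio_disjoint_Ici le_rfl).mono Ico_subset_Iio_self
        Icc_subset_Ici_self).mono inter_subset_right inter_subset_right)
        ((measurable_mannevilleMap hA).inter measurableSet_Icc),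
      ← inter_union_distrib_left, Ico_union_Icc_eq_Icc (by norm_num) (by norm_num)]
  rw [hsplit, hleft, hright, ← lintegral_add_left (by fun_prop), ← setLIntegral_one]
  refine setLIntegral_congr_fun (hA.inter measurableSet_Icc) fun y ⟨_, hy₁, hy₂⟩ => ?_
  rw [← ENNReal.ofReal_add (abs_nonneg _) (abs_nonneg _), abs_of_nonneg (by linarith),
    abs_of_nonneg (by linarith), show (1 - y) / 2 + (y + 1) / 2 = 1 by ring, ENNReal.ofReal_one]

end Manneville

theorem stmt_5 :
    ∀ A : Set ℝ, MeasurableSet A →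
      circleMeasure (mannevilleMap ⁻¹' A) = circleMeasure A := by
  intro A hA
  simp only [circleMeasure, Measure.smul_apply, Measure.restrict_apply' measurableSet_Icc,
    Manneville.volume_preimage_inter_Icc hA]
end
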